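/- Let Ω, K, b, M, E̲ and the faces M_f be as in the setting of a coherent assessment with K nonempty, and let P̲ be an extension of (K, b). Then for every gamble h, P̲(h) ≤ min_{f ∈ K} max_{F ∈ ext(M_f)} ⟨F, h⟩, where ext(M_f) denotes the (nonempty, finite) set of extreme points of the face M_f. -/

import Mathlib

/-
Any extension `P̲` is the lower envelope of a set `M'` of probability mass vectors on which every
`g ∈ K` has expectation at least `b g`, so `M' ⊆ M`. For `f ∈ K`, a minimiser `p_f ∈ M'` of `⟨·, f⟩`
attains `P̲(f) = b(f) = E̲(f)` and hence lies in the face `M_f`. This face is compact and convex, so by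
Krein–Milman it is the closed convex hull of its extreme points, and the linear functional `⟨·, h⟩` is
bounded on it by its supremum over `ext(M_f)`. Therefore `P̲(h) ≤ ⟨p_f, h⟩ ≤ max_{F ∈ ext(M_f)} ⟨F, h⟩`.
-/

open scoped BigOperators

/-- Inner product of gambles: `⟨f,g⟩ = ∑ x, f x * g x`. -/
noncomputable def ip {Ω : Type*} [Fintype Ω] (f g : Ω → ℝ) : ℝ := ∑ x, f x * g x

/-- A probability mass vector on `Ω`. -/
def IsPMV {Ω : Type*} [Fintype Ω] (p : Ω → ℝ) : Prop :=
  (∀ x, 0 ≤ p x) ∧ ∑ x, p x = 1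

open Set

section KreinMilman

variable {E : Type*} [AddCommGroup E] [Module ℝ E] [TopologicalSpace E] [T2Space E]
  [IsTopologicalAddGroup E] [ContinuousSMul ℝ E] [LocallyConvexSpace ℝ E]

theorem le_csSup_image_extremePoints {C : Set E} (hC : IsCompact C) (hCconv : Convex ℝ C)
    (φ : E →L[ℝ] ℝ) {p : E} (hp : p ∈ C) : φ p ≤ sSup (φ '' C.extremePoints ℝ) := by
  have hbdd : BddAbove (φ '' C.extremePoints ℝ) :=
    (hC.bddAbove_image φ.continuous.continuousOn).mono (image_mono extremePoints_subset)
  rw [← closure_convexHull_extremePoints hC hCconv] at hp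
  refine closure_minimal (convexHull_min ?_ (convex_halfSpace_le φ.toLinearMap.isLinear _))
    (isClosed_le φ.continuous continuous_const) hp
  exact fun F hF => le_csSup hbdd (mem_image_of_mem φ hF)

end KreinMilman

section CredalSet

variable {Ω : Type*} [Fintype Ω]

noncomputable def ipLeft (g : Ω → ℝ) : (Ω → ℝ) →L[ℝ] ℝ :=
  LinearMap.toContinuousLinearMap
    { toFun := fun p => ip p g
      map_add' := fun p q => by simp [ip, add_mul, Finset.sum_add_distrib]
      map_smul' := fun c p => by simp [ip, Finset.mul_sum, mul_assoc] }

@[simp]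
theorem ipLeft_apply (g p : Ω → ℝ) : ipLeft g p = ip p g := rfl

/-- The credal set `M` of an assessment `(K, b)`. -/
def credalSet (K : Set (Ω → ℝ)) (b : (Ω → ℝ) → ℝ) : Set (Ω → ℝ) :=
  {p | IsPMV p ∧ ∀ g ∈ K, b g ≤ ip p g}

theorem credalSet_eq_inter (K : Set (Ω → ℝ)) (b : (Ω → ℝ) → ℝ) :
    credalSet K b = stdSimplex ℝ Ω ∩ ⋂ g ∈ K, {p | b g ≤ ipLeft g p} := by
  ext p
  simp [credalSet, IsPMV, stdSimplex]

theorem isCompact_credalSet (K : Set (Ω → ℝ)) (b : (Ω → ℝ) → ℝ) :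
    IsCompact (credalSet K b) := by
  rw [credalSet_eq_inter]
  exact (isCompact_stdSimplex ℝ Ω).inter_right
    (isClosed_biInter fun g _ => isClosed_le continuous_const (ipLeft g).continuous)

theorem convex_credalSet (K : Set (Ω → ℝ)) (b : (Ω → ℝ) → ℝ) :
    Convex ℝ (credalSet K b) := by
  rw [credalSet_eq_inter]
  exact (convex_stdSimplex ℝ Ω).inter
    (convex_iInter₂ fun g _ => convex_halfSpace_ge (ipLeft g).toLinearMap.isLinear (b g))

end CredalSet

theorem stmt14_general {Ω : Type*} [Fintype Ω]
    (K : Finset (Ω → ℝ)) (hK : K.Nonempty) (b : (Ω → ℝ) → ℝ)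
    (M : Set (Ω → ℝ)) (hM : M = {p | IsPMV p ∧ ∀ g ∈ K, b g ≤ ip p g})
    (lE : (Ω → ℝ) → ℝ)
    (hcoh : ∀ g ∈ K, lE g = b g)
    (M' : Set (Ω → ℝ)) (hpmv' : ∀ p ∈ M', IsPMV p)
    (lP : (Ω → ℝ) → ℝ)
    (hlP : ∀ h : Ω → ℝ, IsLeast {r : ℝ | ∃ p ∈ M', r = ip p h} (lP h))
    (hb' : ∀ g ∈ K, lP g = b g) :
    ∀ h : Ω → ℝ,
      lP h ≤ sInf {r : ℝ | ∃ f ∈ K,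
        r = sSup {s : ℝ | ∃ F ∈ Set.extremePoints ℝ {q ∈ M | ip q f = lE f},
          s = ip F h}} := by
  intro h
  change M = credalSet K b at hM
  have hM'M : M' ⊆ M := fun p hp =>
    hM ▸ ⟨hpmv' p hp, fun g hg => hb' g hg ▸ (hlP g).2 ⟨p, hp, rfl⟩⟩
  obtain ⟨f₀, hf₀⟩ := hK
  refine le_csInf ⟨_, f₀, hf₀, rfl⟩ ?_
  rintro _ ⟨f, hf, rfl⟩
  obtain ⟨pf, hpf, hpf_min⟩ := (hlP f).1
  have hface : pf ∈ {q ∈ M | ip q f = lE f} :=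
    ⟨hM'M hpf, by rw [← hpf_min, hb' f hf, hcoh f hf]⟩
  have hface_compact : IsCompact {q ∈ M | ip q f = lE f} :=
    (hM ▸ isCompact_credalSet _ b).inter_right
      (isClosed_eq (ipLeft f).continuous continuous_const)
  have hface_convex : Convex ℝ {q ∈ M | ip q f = lE f} :=
    (hM ▸ convex_credalSet _ b).inter (convex_hyperplane (ipLeft f).toLinearMap.isLinear _)
  calc lP h ≤ ip pf h := (hlP h).2 ⟨pf, hpf, rfl⟩
    _ ≤ _ := by
      simpa [image, eq_comm] using
        le_csSup_image_extremePoints hface_compact hface_convex (ipLeft h) hface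

/-- for any extension `P̲` of a coherent assessment `(K, b)` and any gamble
`h`, `P̲(h) ≤ min_{f ∈ K} max_{F ∈ ext(M_f)} ⟨F, h⟩`, where `ext(M_f)` is the set of
extreme points of the face `M_f`. -/
theorem stmt14 {Ω : Type*} [Fintype Ω] [Nonempty Ω]
    (K : Finset (Ω → ℝ)) (hK : K.Nonempty) (b : (Ω → ℝ) → ℝ)
    (M : Set (Ω → ℝ)) (hM : M = {p | IsPMV p ∧ ∀ g ∈ K, b g ≤ ip p g})
    (hMne : M.Nonempty)
    (lE : (Ω → ℝ) → ℝ)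
    (hlE : ∀ h : Ω → ℝ, IsLeast {r : ℝ | ∃ p ∈ M, r = ip p h} (lE h))
    (hcoh : ∀ g ∈ K, lE g = b g)
    (M' : Set (Ω → ℝ)) (hne' : M'.Nonempty) (hcomp' : IsCompact M')
    (hconv' : Convex ℝ M') (hpmv' : ∀ p ∈ M', IsPMV p)
    (lP : (Ω → ℝ) → ℝ)
    (hlP : ∀ h : Ω → ℝ, IsLeast {r : ℝ | ∃ p ∈ M', r = ip p h} (lP h))
    (hb' : ∀ g ∈ K, lP g = b g) :
    ∀ h : Ω → ℝ,
      lP h ≤ sInf {r : ℝ | ∃ f ∈ K,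
        r = sSup {s : ℝ | ∃ F ∈ Set.extremePoints ℝ {q ∈ M | ip q f = lE f},
          s = ip F h}} :=
  stmt14_general K hK b M hM lE hcoh M' hpmv' lP hlP hb'
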